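/- arXiv:math/0502580 — 4 statements merged into one kernel-verified Lean document; each statement's English description precedes it below -/
import Mathlib

section
/- Let N ≥ 1 and let L be an even natural number with L ≥ 2. If A and B are even natural numbers with A + B = L, then ∏_{m=0}^{A/2 - 1} (2m+1)/(L - 2m - 1) = ∏_{m=0}^{B/2 - 1} (2m+1)/(L - 2m - 1). -/
open Finset

theorem stmt_0 (N L A B : ℕ) (hN : 1 ≤ N) (hL : Even L) (hL2 : 2 ≤ L)
    (hA : Even A) (hB : Even B) (hAB : A + B = L) :
    ∏ m ∈ Finset.range (A / 2), ((2 * m + 1 : ℝ) / ((L : ℝ) - 2 * m - 1)) =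
      ∏ m ∈ Finset.range (B / 2), ((2 * m + 1 : ℝ) / ((L : ℝ) - 2 * m - 1)) := by
  obtain ⟨a, ha⟩ := hA
  obtain ⟨b, hb⟩ := hB
  obtain ⟨n, hn⟩ := hL
  have hA2 : A / 2 = a := by omega
  have hB2 : B / 2 = b := by omega
  have hab : a + b = n := by omega
  have hn1 : 1 ≤ n := by omega
  set f : ℕ → ℝ := fun m => (2 * m + 1 : ℝ) / ((L : ℝ) - 2 * m - 1) with hf
  have hLn : (L : ℝ) = 2 * n := by
    have : L = 2 * n := by omega
    rw [this]; push_cast; ring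
  -- positivity of factors
  have hpos : ∀ m, m < n → 0 < f m := by
    intro m hm
    have h1 : (0:ℝ) < 2 * m + 1 := by positivity
    have h2 : (0:ℝ) < (L : ℝ) - 2 * m - 1 := by
      rw [hLn]
      have : (m : ℝ) + 1 ≤ n := by exact_mod_cast hm
      linarith
    exact div_pos h1 h2
  -- reflection: f (n - 1 - m) = (f m)⁻¹ for m < n
  have hrefl : ∀ m, m < n → f (n - 1 - m) = (f m)⁻¹ := by
    intro m hm
    have hc : ((n - 1 - m : ℕ) : ℝ) = (n : ℝ) - 1 - m := by
      have h1 : m ≤ n - 1 := by omega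
      rw [Nat.cast_sub h1, Nat.cast_sub hn1, Nat.cast_one]
    have hne1 : (2 * (m:ℝ) + 1) ≠ 0 := by positivity
    have hne2 : ((L : ℝ) - 2 * m - 1) ≠ 0 := ne_of_gt (by
      have := hpos m hm
      rw [hLn]
      have : (m : ℝ) + 1 ≤ n := by exact_mod_cast hm
      linarith)
    simp only [hf, hc, hLn]
    rw [inv_div]
    congr 1 <;> ring
  -- full product equals 1
  have hfull : ∏ m ∈ Finset.range n, f m = 1 := by
    have h1 : ∏ m ∈ Finset.range n, f (n - 1 - m) = ∏ m ∈ Finset.range n, f m :=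
      Finset.prod_range_reflect f n
    have h2 : ∏ m ∈ Finset.range n, f (n - 1 - m) = (∏ m ∈ Finset.range n, f m)⁻¹ := by
      rw [← Finset.prod_inv_distrib]
      exact Finset.prod_congr rfl fun m hm => hrefl m (Finset.mem_range.mp hm)
    have hP : 0 < ∏ m ∈ Finset.range n, f m :=
      Finset.prod_pos fun m hm => hpos m (Finset.mem_range.mp hm)
    have heq := h1.symm.trans h2
    have hsq : (∏ m ∈ Finset.range n, f m) * (∏ m ∈ Finset.range n, f m) = 1 := by
      nth_rewrite 2 [heq]
      exact mul_inv_cancel₀ (ne_of_gt hP)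
    rcases mul_self_eq_one_iff.mp hsq with h | h
    · exact h
    · linarith
  -- split full product
  have hsplit : ∏ m ∈ Finset.range n, f m =
      (∏ m ∈ Finset.range a, f m) * ∏ m ∈ Finset.Ico a n, f m :=
    (Finset.prod_range_mul_prod_Ico f (by omega : a ≤ n)).symm
  have hIco : ∏ m ∈ Finset.Ico a n, f m = (∏ m ∈ Finset.range b, f m)⁻¹ := by
    rw [Finset.prod_Ico_eq_prod_range]
    have hnb : n - a = b := by omega
    rw [hnb]
    rw [← Finset.prod_range_reflect (fun k => f (a + k)) b]
    rw [← Finset.prod_inv_distrib]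
    refine Finset.prod_congr rfl fun k hk => ?_
    have hk' : k < b := Finset.mem_range.mp hk
    have : a + (b - 1 - k) = n - 1 - k := by omega
    rw [this]
    exact hrefl k (by omega)
  have hPb : 0 < ∏ m ∈ Finset.range b, f m :=
    Finset.prod_pos fun m hm => hpos m (by have := Finset.mem_range.mp hm; omega)
  rw [hA2, hB2]
  have : (1:ℝ) = (∏ m ∈ Finset.range a, f m) * (∏ m ∈ Finset.range b, f m)⁻¹ := by
    rw [← hfull, hsplit, hIco]
  have hne : (∏ m ∈ Finset.range b, f m) ≠ 0 := ne_of_gt hPb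
  show ∏ m ∈ Finset.range a, f m = ∏ m ∈ Finset.range b, f m
  field_simp at this
  linarith
end

section
/- Let N ≥ 2 be a natural number and define h(m) = ((N-m)(2m+1)) / ((m+1)(2N-2m-1)) for 0 ≤ m ≤ N-1. Then for every 1 ≤ k ≤ N-1 we have ∏_{m=0}^{k-1} h(m) ≤ 1. -/
open Finset

lemma centralBinom_mul_le (a b : ℕ) :
    a.centralBinom * b.centralBinom ≤ (a + b).centralBinom := by
  rw [Nat.centralBinom_eq_two_mul_choose, Nat.centralBinom_eq_two_mul_choose,
    Nat.centralBinom_eq_two_mul_choose]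
  have h : 2 * (a + b) = 2 * a + 2 * b := by ring
  rw [h, Nat.add_choose_eq]
  have hmem : ((a, b) : ℕ × ℕ) ∈ Finset.HasAntidiagonal.antidiagonal (a + b) := by
    simp
  exact Finset.single_le_sum (f := fun ij => (2*a).choose ij.1 * (2*b).choose ij.2)
    (fun i _ => Nat.zero_le _) hmem

lemma prod_eq_centralBinom (N : ℕ) (hN : 2 ≤ N) (k : ℕ) (hk : k ≤ N) :
    ∏ m ∈ Finset.range k,
        (((N : ℝ) - m) * (2 * m + 1)) / (((m : ℝ) + 1) * (2 * N - 2 * m - 1)) =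
      (k.centralBinom * (N - k).centralBinom : ℝ) / N.centralBinom := by
  induction k with
  | zero => simp [div_self (show ((N.centralBinom : ℝ)) ≠ 0 by exact_mod_cast N.centralBinom_ne_zero)]
  | succ k ih =>
    have hk' : k ≤ N := le_of_lt (Nat.lt_of_succ_le hk)
    rw [Finset.prod_range_succ, ih hk']
    have hkN : k < N := Nat.lt_of_succ_le hk
    -- recurrences
    have h1 : ((k:ℝ) + 1) * (k+1).centralBinom = 2 * (2 * k + 1) * k.centralBinom := by
      exact_mod_cast congrArg (Nat.cast : ℕ → ℝ) (Nat.succ_mul_centralBinom_succ k)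
    have h2 : ((N - k : ℕ) : ℝ) * (N - k).centralBinom
        = 2 * (2 * (N - (k+1) : ℕ) + 1) * ((N - (k+1) : ℕ)).centralBinom := by
      have : N - k = (N - (k+1)) + 1 := by omega
      rw [this]
      exact_mod_cast congrArg (Nat.cast : ℕ → ℝ) (Nat.succ_mul_centralBinom_succ (N - (k+1)))
    have hc1 : ((N - k : ℕ) : ℝ) = (N : ℝ) - k := by
      push_cast [Nat.cast_sub hk'] ; ring
    have hc2 : ((N - (k+1) : ℕ) : ℝ) = (N : ℝ) - (k + 1) := by
      push_cast [Nat.cast_sub hk] ; ring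
    have hNk : (0:ℝ) < (N:ℝ) - k := by
      have : (k:ℝ) < N := by exact_mod_cast hkN
      linarith
    have hden : ((k:ℝ) + 1) * (2 * N - 2 * k - 1) ≠ 0 := by
      have : (2:ℝ) * N - 2 * k - 1 > 0 := by linarith
      positivity
    have hcb0 : ((N.centralBinom : ℝ)) ≠ 0 := by
      exact_mod_cast N.centralBinom_ne_zero
    have hcb1 : ((k.centralBinom : ℝ)) ≠ 0 := by exact_mod_cast k.centralBinom_ne_zero
    have hcb2 : (((N - k).centralBinom : ℝ)) ≠ 0 := by
      exact_mod_cast (N - k).centralBinom_ne_zero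
    rw [hc1] at h2; rw [hc2] at h2
    have hpos : (0:ℝ) < 2 * N - 2 * k - 1 := by
      have : (k:ℝ) < N := by exact_mod_cast hkN
      have h2k : (k:ℝ) + 1 ≤ N := by exact_mod_cast hk
      linarith
    have hA' : (((k+1).centralBinom : ℕ) : ℝ)
        = 2 * (2 * k + 1) * k.centralBinom / ((k:ℝ) + 1) := by
      rw [eq_div_iff (by positivity)]
      linear_combination h1
    have hB' : (((N - (k+1)).centralBinom : ℕ) : ℝ)
        = ((N:ℝ) - k) * (N - k).centralBinom / (2 * (2 * (N:ℝ) - 2 * k - 1)) := by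
      rw [eq_div_iff (by positivity)]
      linear_combination -h2
    push_cast
    rw [hA', hB']
    field_simp

theorem stmt_2 (N : ℕ) (hN : 2 ≤ N) (k : ℕ) (hk1 : 1 ≤ k) (hk2 : k ≤ N - 1) :
    ∏ m ∈ Finset.range k,
        (((N : ℝ) - m) * (2 * m + 1)) / (((m : ℝ) + 1) * (2 * N - 2 * m - 1)) ≤ 1 := by
  have hk : k ≤ N := by omega
  rw [prod_eq_centralBinom N hN k hk]
  rw [div_le_one (by exact_mod_cast N.centralBinom_pos)]
  have := centralBinom_mul_le k (N - k)
  have hnk : k + (N - k) = N := by omega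
  rw [hnk] at this
  exact_mod_cast this
end

section
/- Let L and k be natural numbers with 2k ≤ L and L even. Then ∏_{n=0}^{k-1} (2k - 2n - 1)/(L - 2n - 1) ≤ C(L/2, k)^{-1}, where C(L/2, k) is the binomial coefficient. -/
open Finset

theorem stmt_5 (L k : ℕ) (hL : Even L) (hk : 2 * k ≤ L) :
    ∏ n ∈ Finset.range k, ((2 * k - 2 * n - 1 : ℝ) / ((L : ℝ) - 2 * n - 1)) ≤
      (((L / 2).choose k : ℝ))⁻¹ := by
  obtain ⟨m, rfl⟩ := hL
  have hm : m + m = 2 * m := by ring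
  rw [hm] at hk ⊢
  have hkm : k ≤ m := by omega
  have hL2 : (2 * m) / 2 = m := by omega
  rw [hL2]
  have step : ∀ n ∈ Finset.range k,
      ((2 * k - 2 * n - 1 : ℝ) / ((2 * m : ℕ) - 2 * n - 1)) ≤
        ((k : ℝ) - n) / ((m : ℝ) - n) := by
    intro n hn
    simp only [mem_range] at hn
    have h1 : (0:ℝ) < 2 * k - 2 * n - 1 := by
      have : (n:ℝ) + 1 ≤ k := by exact_mod_cast hn
      linarith
    have h2 : (2 * k - 2 * n - 1 : ℝ) ≤ (2 * m : ℕ) - 2 * n - 1 := by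
      have : (k:ℝ) ≤ m := by exact_mod_cast hkm
      push_cast; linarith
    have h3 : (0:ℝ) < ((2 * m : ℕ) : ℝ) - 2 * n - 1 := lt_of_lt_of_le h1 h2
    have hnk : (n:ℝ) + 1 ≤ k := by exact_mod_cast hn
    have hkm' : (k:ℝ) ≤ m := by exact_mod_cast hkm
    rw [div_le_div_iff₀ h3 (by linarith : (0:ℝ) < (m:ℝ) - n)]
    push_cast
    nlinarith
  calc ∏ n ∈ Finset.range k, ((2 * k - 2 * n - 1 : ℝ) / ((2 * m : ℕ) - 2 * n - 1))
      ≤ ∏ n ∈ Finset.range k, ((k : ℝ) - n) / ((m : ℝ) - n) := by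
        apply Finset.prod_le_prod
        · intro n hn
          simp only [mem_range] at hn
          have : (n:ℝ) + 1 ≤ k := by exact_mod_cast hn
          have h3 : (0:ℝ) < ((2*m:ℕ):ℝ) - 2*n - 1 := by
            have : (k:ℝ) ≤ m := by exact_mod_cast hkm
            push_cast; linarith
          have h1 : (0:ℝ) ≤ 2 * k - 2 * n - 1 := by linarith
          exact div_nonneg h1 h3.le
        · exact step
    _ = ((m.choose k : ℝ))⁻¹ := by
        have hnum : ∀ n ∈ Finset.range k, ((k:ℝ) - n) = ((k - n : ℕ) : ℝ) := by
          intro n hn; simp only [mem_range] at hn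
          rw [Nat.cast_sub hn.le]
        have hden : ∀ n ∈ Finset.range k, ((m:ℝ) - n) = ((m - n : ℕ) : ℝ) := by
          intro n hn; simp only [mem_range] at hn
          rw [Nat.cast_sub (le_trans hn.le hkm)]
        rw [Finset.prod_congr rfl (fun n hn => by rw [hnum n hn, hden n hn])]
        rw [Finset.prod_div_distrib]
        rw [← Nat.cast_prod, ← Nat.cast_prod]
        rw [← Nat.descFactorial_eq_prod_range, ← Nat.descFactorial_eq_prod_range]
        rw [Nat.descFactorial_self, Nat.descFactorial_eq_factorial_mul_choose]
        have hc : (0:ℝ) < m.choose k := by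
          exact_mod_cast Nat.choose_pos hkm
        have hf : (0:ℝ) < k.factorial := by exact_mod_cast k.factorial_pos
        push_cast
        field_simp
end

section
/- Fix τ ∈ (2,3), C > 0, and for N ≥ 3 define u_1(N) = N^{1/(τ-1)}/log N and u_k(N) = C log N · (u_{k-1}(N))^{τ-2} for k ≥ 2. With k*(N) = ⌈2 log log N / |log(τ-2)|⌉, one has log u_{k*(N)}(N) / log log N → 1/(3-τ) as N → ∞. -/
open Filter

theorem stmt_11 (τ : ℝ) (hτ2 : 2 < τ) (hτ3 : τ < 3) (C : ℝ) (hC : 0 < C)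
    (u : ℕ → ℕ → ℝ)
    (hu1 : ∀ N : ℕ, 3 ≤ N → u N 1 = (N : ℝ) ^ ((1 : ℝ) / (τ - 1)) / Real.log N)
    (huk : ∀ N : ℕ, 3 ≤ N → ∀ k, 2 ≤ k →
      u N k = C * Real.log N * (u N (k - 1)) ^ (τ - 2))
    (kstar : ℕ → ℕ)
    (hkstar : ∀ N : ℕ,
      kstar N = ⌈2 * Real.log (Real.log N) / |Real.log (τ - 2)|⌉₊) :
    Tendsto (fun N : ℕ => Real.log (u N (kstar N)) / Real.log (Real.log N))
      atTop (nhds (1 / (3 - τ))) := by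
  have ha0 : (0:ℝ) < τ - 2 := by linarith
  have ha1 : τ - 2 < 1 := by linarith
  have h3τ : (0:ℝ) < 3 - τ := by linarith
  have hτ1 : (0:ℝ) < τ - 1 := by linarith
  have hloga : Real.log (τ - 2) < 0 := Real.log_neg ha0 ha1
  have habs : |Real.log (τ - 2)| = -(Real.log (τ - 2)) := abs_of_neg hloga
  -- log N > 1 for N ≥ 3
  have hLgt : ∀ N : ℕ, 3 ≤ N → 1 < Real.log N := by
    intro N hN
    have h3 : (3:ℝ) ≤ N := by exact_mod_cast hN
    have h13 : (1:ℝ) < Real.log 3 := by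
      rw [show (1:ℝ) = Real.log (Real.exp 1) by rw [Real.log_exp]]
      apply Real.log_lt_log (Real.exp_pos 1)
      linarith [Real.exp_one_lt_d9]
    calc (1:ℝ) < Real.log 3 := h13
      _ ≤ Real.log N := Real.log_le_log (by norm_num) h3
  -- closed form
  have key : ∀ N : ℕ, 3 ≤ N → ∀ k : ℕ, 1 ≤ k →
      0 < u N k ∧ Real.log (u N k) =
        Real.log (C * Real.log N) * (1 - (τ-2)^(k-1))/(3-τ)
        + (τ-2)^(k-1) * (Real.log N/(τ-1) - Real.log (Real.log N)) := by
    intro N hN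
    have hL : 1 < Real.log N := hLgt N hN
    have hL0 : (0:ℝ) < Real.log N := by linarith
    have hN0 : (0:ℝ) < N := by positivity
    intro k hk
    induction k with
    | zero => omega
    | succ m ih =>
      rcases Nat.lt_or_ge m 1 with h1 | h1
      · -- base case m = 0
        interval_cases m
        have hpos : 0 < u N 1 := by
          rw [hu1 N hN]
          exact div_pos (Real.rpow_pos_of_pos hN0 _) hL0
        refine ⟨hpos, ?_⟩
        rw [hu1 N hN, Real.log_div (ne_of_gt (Real.rpow_pos_of_pos hN0 _)) (ne_of_gt hL0),
          Real.log_rpow hN0]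
        simp only [Nat.sub_self, pow_zero, sub_self, mul_zero, zero_div, zero_add, one_mul,
          mul_zero]
        ring
      · -- step case m ≥ 1
        obtain ⟨hpos, hlog⟩ := ih h1
        have hrec := huk N hN (m+1) (by omega)
        simp only [Nat.add_sub_cancel] at hrec
        have hpos' : 0 < u N (m+1) := by
          rw [hrec]
          exact mul_pos (mul_pos hC hL0) (Real.rpow_pos_of_pos hpos _)
        refine ⟨hpos', ?_⟩
        rw [hrec, Real.log_mul (by positivity) (ne_of_gt (Real.rpow_pos_of_pos hpos _)),
          Real.log_rpow hpos, hlog]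
        simp only [Nat.add_sub_cancel]
        obtain ⟨p, rfl⟩ : ∃ p, m = p + 1 := ⟨m - 1, by omega⟩
        simp only [Nat.add_sub_cancel]
        rw [pow_succ]
        have h3τ' : (3:ℝ) - τ ≠ 0 := ne_of_gt h3τ
        field_simp
        ring
  -- kstar ≥ 1
  have hk1 : ∀ N : ℕ, 3 ≤ N → 1 ≤ kstar N := by
    intro N hN
    rw [hkstar N, Nat.one_le_ceil_iff]
    apply div_pos
    · have h := Real.log_pos (hLgt N hN)
      linarith
    · rw [habs]; linarith
  -- the bound on A N * log N
  have hbound : ∀ N : ℕ, 3 ≤ N →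
      (τ-2)^(kstar N - 1) * Real.log N ≤ (τ-2)⁻¹ / Real.log N := by
    intro N hN
    have hL : 1 < Real.log N := hLgt N hN
    have hL0 : (0:ℝ) < Real.log N := by linarith
    have hLL0 : 0 < Real.log (Real.log N) := Real.log_pos hL
    have hceil : 2 * Real.log (Real.log N) / |Real.log (τ-2)| ≤ (kstar N : ℝ) := by
      rw [hkstar N]; exact Nat.le_ceil _
    have hk1' := hk1 N hN
    have hcast : ((kstar N - 1 : ℕ) : ℝ) = (kstar N : ℝ) - 1 := by
      push_cast [hk1']; ring
    have hstep : ((kstar N - 1 : ℕ) : ℝ) * Real.log (τ-2) ≤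
        -(2 * Real.log (Real.log N)) - Real.log (τ-2) := by
      rw [hcast]
      have h1 : 2 * Real.log (Real.log N) / |Real.log (τ-2)| - 1 ≤ (kstar N : ℝ) - 1 := by
        linarith
      have h2 : ((kstar N : ℝ) - 1) * Real.log (τ-2) ≤
          (2 * Real.log (Real.log N) / |Real.log (τ-2)| - 1) * Real.log (τ-2) :=
        mul_le_mul_of_nonpos_right h1 (le_of_lt hloga)
      have hne : Real.log (τ-2) ≠ 0 := ne_of_lt hloga
      have h3 : (2 * Real.log (Real.log N) / |Real.log (τ-2)| - 1) * Real.log (τ-2) =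
          -(2 * Real.log (Real.log N)) - Real.log (τ-2) := by
        rw [habs, div_neg]
        have hq : 2 * Real.log (Real.log N) / Real.log (τ-2) * Real.log (τ-2)
            = 2 * Real.log (Real.log N) := div_mul_cancel₀ _ hne
        nlinarith [hq]
      linarith
    have hA : (τ-2)^(kstar N - 1) ≤ (Real.log N * Real.log N)⁻¹ * (τ-2)⁻¹ := by
      have he := Real.exp_log (pow_pos ha0 (kstar N - 1))
      rw [← he, Real.log_pow]
      calc Real.exp (((kstar N - 1 : ℕ) : ℝ) * Real.log (τ-2))
          ≤ Real.exp (-(2 * Real.log (Real.log N)) - Real.log (τ-2)) :=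
            Real.exp_le_exp.2 hstep
        _ = (Real.log N * Real.log N)⁻¹ * (τ-2)⁻¹ := by
            rw [sub_eq_add_neg, Real.exp_add, Real.exp_neg, Real.exp_neg, Real.exp_log ha0,
              show 2 * Real.log (Real.log N) = Real.log (Real.log N) + Real.log (Real.log N)
                by ring,
              Real.exp_add, Real.exp_log hL0]
    calc (τ-2)^(kstar N - 1) * Real.log N
        ≤ (Real.log N * Real.log N)⁻¹ * (τ-2)⁻¹ * Real.log N :=
          mul_le_mul_of_nonneg_right hA hL0.le
      _ = (τ-2)⁻¹ / Real.log N := by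
          field_simp
  -- standard limits
  have hNtop : Tendsto (fun N : ℕ => (N:ℝ)) atTop atTop := tendsto_natCast_atTop_atTop
  have hLtop : Tendsto (fun N : ℕ => Real.log N) atTop atTop :=
    Real.tendsto_log_atTop.comp hNtop
  have hLLtop : Tendsto (fun N : ℕ => Real.log (Real.log N)) atTop atTop :=
    Real.tendsto_log_atTop.comp hLtop
  set A : ℕ → ℝ := fun N => (τ-2)^(kstar N - 1) with hAdef
  have hAL0 : Tendsto (fun N : ℕ => A N * Real.log N) atTop (nhds 0) := by
    apply squeeze_zero' (t₀ := atTop) (g := fun N : ℕ => (τ-2)⁻¹ / Real.log N)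
    · filter_upwards [eventually_ge_atTop 3] with N hN
      have hL0 : (0:ℝ) < Real.log N := lt_trans one_pos (hLgt N hN)
      positivity
    · filter_upwards [eventually_ge_atTop 3] with N hN
      exact hbound N hN
    · exact Tendsto.div_atTop tendsto_const_nhds hLtop
  have hA0 : Tendsto A atTop (nhds 0) := by
    apply squeeze_zero' (t₀ := atTop) (g := fun N : ℕ => A N * Real.log N)
    · filter_upwards with N
      positivity
    · filter_upwards [eventually_ge_atTop 3] with N hN
      have hL1 : 1 ≤ Real.log N := (hLgt N hN).le
      have : (0:ℝ) < A N := pow_pos ha0 _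
      exact le_mul_of_one_le_right this.le hL1
    · exact hAL0
  -- the explicit function
  have hG : Tendsto (fun N : ℕ =>
      Real.log C * (1 - A N) * (((3-τ) * Real.log (Real.log N))⁻¹)
      + (1 - A N) / (3-τ)
      + (A N * Real.log N) * (((τ-1) * Real.log (Real.log N))⁻¹)
      - A N) atTop (nhds (1 / (3-τ))) := by
    have hinv1 : Tendsto (fun N : ℕ => ((3-τ) * Real.log (Real.log N))⁻¹) atTop (nhds 0) :=
      (hLLtop.const_mul_atTop h3τ).inv_tendsto_atTop
    have hinv2 : Tendsto (fun N : ℕ => ((τ-1) * Real.log (Real.log N))⁻¹) atTop (nhds 0) :=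
      (hLLtop.const_mul_atTop hτ1).inv_tendsto_atTop
    have hA1 : Tendsto (fun N : ℕ => 1 - A N) atTop (nhds 1) := by
      have h1 : Tendsto (fun _ : ℕ => (1:ℝ)) atTop (nhds 1) := tendsto_const_nhds
      simpa using h1.sub hA0
    have hc : Tendsto (fun _ : ℕ => Real.log C) atTop (nhds (Real.log C)) := tendsto_const_nhds
    have T1 := (hc.mul hA1).mul hinv1
    have T2 := hA1.div_const (3-τ)
    have T3 := hAL0.mul hinv2
    have := ((T1.add T2).add T3).sub hA0
    simpa using this
  apply hG.congr'
  filter_upwards [eventually_ge_atTop 3] with N hN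
  have hL : 1 < Real.log N := hLgt N hN
  have hL0 : (0:ℝ) < Real.log N := lt_trans one_pos hL
  have hLL0 : 0 < Real.log (Real.log N) := Real.log_pos hL
  obtain ⟨hpos, hlog⟩ := key N hN (kstar N) (hk1 N hN)
  rw [hlog, Real.log_mul (ne_of_gt hC) (ne_of_gt hL0)]
  have hLLne : Real.log (Real.log N) ≠ 0 := ne_of_gt hLL0
  field_simp
  ring
end
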